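/- Let D- be a canonical negative Boolean automaton double-cycle with both cycle sizes n and m even, n,m ≥ 2. Any sequence of asynchronous single-automaton updates transforming the all-zeros configuration (0^n, 0^m) into the maximally expressive configuration ((10)^{n/2}, (10)^{m/2}) has length Ω(n² + m²); combined with the upper bound (n+m)² − 5(n−1) − 3m + O(n+m), the minimal number of updates needed is Θ(n² + m²). -/

import Mathlib

/-- A configuration of a Boolean automaton double-cycle with cycles of sizes `n`
and `m`: the shared automaton `c` is index 0 of both cycles (so valid
configurations satisfy `x.1 0 = x.2 0`). -/
abbrev Cfg (n m : ℕ) := (Fin n → Bool) × (Fin m → Bool)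

/-- One asynchronous single-automaton update in a double-cycle whose shared
automaton `c` computes `fc`; every non-shared automaton copies its predecessor. -/
inductive Step {n m : ℕ} (fc : Cfg n m → Bool) : Cfg n m → Cfg n m → Prop
  | left (x : Cfg n m) (i : Fin n) (hi : 1 ≤ i.val) :
      Step fc x (Function.update x.1 i (x.1 ⟨i.val - 1, by have := i.isLt; omega⟩), x.2)
  | right (x : Cfg n m) (j : Fin m) (hj : 1 ≤ j.val) :
      Step fc x (x.1, Function.update x.2 j (x.2 ⟨j.val - 1, by have := j.isLt; omega⟩))
  | center (x : Cfg n m) (i : Fin n) (j : Fin m) (hi : i.val = 0) (hj : j.val = 0) :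
      Step fc x (Function.update x.1 i (fc x), Function.update x.2 j (fc x))

/-- `Steps fc k x y`: configuration `y` is obtained from `x` by exactly `k`
asynchronous single-automaton updates. -/
def Steps {n m : ℕ} (fc : Cfg n m → Bool) : ℕ → Cfg n m → Cfg n m → Prop
  | 0, x, y => x = y
  | k + 1, x, y => ∃ z, Step fc x z ∧ Steps fc k z y

/-!
Lower bound: weight the boundary between cells `p` and `p + 1` of a cycle by `p + 1` (and the
wrap-around boundary by `0`). Copying a cell into its successor can only push a boundary one
edge further from `c`, raising this potential by at most one, and an update of `c` only touches
edges of weight `1` and `0`; so each update raises the total potential by at most `2`. The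
alternating configuration has potential `n(n-1)/2 + m(m-1)/2`.

Upper bound: in one round of `n + m - 1` updates, shift both cycles by one cell, starting from
the far end, and then update `c`, which pushes a new value into both cycles. If `c` emits
alternating values for `n + m - 1` rounds, both cycles end up alternating. For `c` to keep emitting
the alternating sequence, it must see the value it emitted last. During the first `n - 1` rounds,
while the left cycle still holds its initial zeros at the far end, we therefore flood the right
cycle with the last emitted value instead of shifting it.
-/

open Function

theorem Finset.sum_le_sum_add_of_eq_off_pair {ι M : Type*} [Fintype ι] [DecidableEq ι]
    [AddCommMonoid M] [PartialOrder M] [IsOrderedAddMonoid M] {f g : ι → M} {a b : ι}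
    (hab : a ≠ b) (hfg : ∀ p, p ≠ a → p ≠ b → f p = g p) {c : M}
    (h : f a + f b ≤ g a + g b + c) : ∑ p, f p ≤ ∑ p, g p + c := by
  have hrest : ∑ p ∈ {a, b}ᶜ, f p = ∑ p ∈ {a, b}ᶜ, g p :=
    Finset.sum_congr rfl fun p hp => by
      simp only [Finset.mem_compl, Finset.mem_insert, Finset.mem_singleton, not_or] at hp
      exact hfg p hp.1 hp.2
  rw [← Finset.sum_add_sum_compl {a, b} f, ← Finset.sum_add_sum_compl {a, b} g,
    Finset.sum_pair hab, Finset.sum_pair hab, hrest, add_right_comm _ _ c]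
  exact add_le_add_left h _

theorem val_finRotate {n : ℕ} (i : Fin n) : (finRotate n i : ℕ) = (i + 1) % n := by
  obtain ⟨n, rfl⟩ : ∃ k, n = k + 1 := ⟨n - 1, by have := i.pos; omega⟩
  rw [finRotate_apply, Fin.val_add_one]
  split_ifs with h
  · subst h; simp
  · rw [Nat.mod_eq_of_lt]; have := Fin.val_lt_last h; omega

variable {n m : ℕ}

namespace Steps

variable {fc : Cfg n m → Bool}

theorem trans : ∀ {a b : ℕ} {x y z : Cfg n m},
    Steps fc a x y → Steps fc b y z → Steps fc (a + b) x z
  | 0, _, _, _, _, rfl, h => by rwa [Nat.zero_add]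
  | _ + 1, _, _, _, _, ⟨w, hs, h⟩, h' => by
    rw [Nat.add_right_comm]; exact ⟨w, hs, trans h h'⟩

theorem single {x y : Cfg n m} (h : Step fc x y) : Steps fc 1 x y := ⟨y, h, rfl⟩

theorem iterate {d : ℕ} (st : ℕ → Cfg n m) :
    ∀ N, (∀ s < N, Steps fc d (st s) (st (s + 1))) → Steps fc (N * d) (st 0) (st N)
  | 0, _ => by rw [Nat.zero_mul]; rfl
  | N + 1, h => by
    rw [Nat.succ_mul]
    exact (iterate st N fun s hs => h s (by omega)).trans (h N (by omega))

end Steps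

theorem Step.swap {fc : Cfg n m → Bool} {x y : Cfg n m} (h : Step fc x y) :
    Step (fun z : Cfg m n => fc z.swap) x.swap y.swap := by
  cases h with
  | left i hi => exact Step.right x.swap i hi
  | right j hj => exact Step.left x.swap j hj
  | center i j hi hj => exact Step.center x.swap j i hj hi

theorem Steps.swap {fc : Cfg n m → Bool} : ∀ {k : ℕ} {x y : Cfg n m},
    Steps fc k x y → Steps (fun z : Cfg m n => fc z.swap) k x.swap y.swap
  | 0, _, _, rfl => rfl
  | _ + 1, _, _, ⟨z, hs, h⟩ => ⟨z.swap, hs.swap, h.swap⟩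

theorem Step.left_of_eq {fc : Cfg n m → Bool} {g g' : Fin n → Bool} (h : Fin m → Bool)
    (i : Fin n) (hi : 1 ≤ i.val)
    (hg' : ∀ j, g' j = if j = i then g ⟨i - 1, by have := i.isLt; omega⟩ else g j) :
    Step fc (g, h) (g', h) := by
  convert Step.left (fc := fc) (g, h) i hi
  funext j; rw [hg', update_apply]

/-! ### The lower bound -/

/-- `finRotate n p` is `p + 1`, except that the last cell is sent to `0`. -/
def weightedBoundaryCount (g : Fin n → Bool) : ℕ :=
  ∑ p, (finRotate n p : ℕ) * (g p != g (finRotate n p)).toNat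

theorem weightedBoundaryCount_update_prev_le (g : Fin n → Bool) (i : Fin n) (hi : 1 ≤ i.val) :
    weightedBoundaryCount (update g i (g ⟨i - 1, by omega⟩)) ≤ weightedBoundaryCount g + 1 := by
  set i₀ : Fin n := ⟨i - 1, by omega⟩
  have hrot : finRotate n i₀ = i := Fin.ext <| by
    rw [val_finRotate, Nat.sub_add_cancel hi, Nat.mod_eq_of_lt i.isLt]
  have hne : i₀ ≠ i := fun h => by simp [i₀, Fin.ext_iff] at h; omega
  refine Finset.sum_le_sum_add_of_eq_off_pair hne (fun p hp₀ hp => ?_) ?_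
  · have : finRotate n p ≠ i := hrot ▸ (finRotate n).injective.ne hp₀
    simp only [update_of_ne hp, update_of_ne this]
  · have hle : (finRotate n i : ℕ) ≤ i + 1 := by rw [val_finRotate]; exact Nat.mod_le _ _
    have hfix : finRotate n i ≠ i := fun h =>
      hne ((finRotate n).injective (h.trans hrot.symm)).symm
    rw [hrot, update_self, update_of_ne hne, update_of_ne hfix]
    have htri : (g i₀ != g (finRotate n i)).toNat ≤
        (g i₀ != g i).toNat + (g i != g (finRotate n i)).toNat := by
      cases g i₀ <;> cases g i <;> cases g (finRotate n i) <;> decide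
    have hbit := Bool.toNat_le (g i₀ != g i)
    rw [bne_self_eq_false, Bool.toNat_false, mul_zero, zero_add]
    nlinarith

theorem weightedBoundaryCount_update_zero_le (hn : 2 ≤ n) (g : Fin n → Bool) (i : Fin n)
    (hi : i.val = 0) (v : Bool) :
    weightedBoundaryCount (update g i v) ≤ weightedBoundaryCount g + 1 := by
  set last : Fin n := ⟨n - 1, by omega⟩
  have hrot : finRotate n last = i := Fin.ext <| by
    rw [val_finRotate, hi, Nat.sub_add_cancel (by omega), Nat.mod_self]
  have hne : i ≠ last := fun h => by simp [last, Fin.ext_iff] at h; omega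
  refine Finset.sum_le_sum_add_of_eq_off_pair hne (fun p hp hp₁ => ?_) ?_
  · have : finRotate n p ≠ i := hrot ▸ (finRotate n).injective.ne hp₁
    simp only [update_of_ne hp, update_of_ne this]
  · have : (finRotate n i : ℕ) = 1 := by rw [val_finRotate, hi, Nat.mod_eq_of_lt hn]
    rw [hrot, this, hi, zero_mul, zero_mul, add_zero, add_zero, one_mul]
    exact (Bool.toNat_le _).trans (Nat.le_add_left _ _)

theorem Step.weightedBoundaryCount_le (hn : 2 ≤ n) (hm : 2 ≤ m) {fc : Cfg n m → Bool}
    {x y : Cfg n m} (h : Step fc x y) :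
    weightedBoundaryCount y.1 + weightedBoundaryCount y.2 ≤
      weightedBoundaryCount x.1 + weightedBoundaryCount x.2 + 2 := by
  cases h with
  | left i hi => have := weightedBoundaryCount_update_prev_le x.1 i hi; dsimp only; omega
  | right j hj => have := weightedBoundaryCount_update_prev_le x.2 j hj; dsimp only; omega
  | center i j hi hj =>
    have := weightedBoundaryCount_update_zero_le hn x.1 i hi (fc x)
    have := weightedBoundaryCount_update_zero_le hm x.2 j hj (fc x)
    dsimp only; omega

theorem Steps.weightedBoundaryCount_le (hn : 2 ≤ n) (hm : 2 ≤ m) {fc : Cfg n m → Bool} :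
    ∀ {k : ℕ} {x y : Cfg n m}, Steps fc k x y →
      weightedBoundaryCount y.1 + weightedBoundaryCount y.2 ≤
        weightedBoundaryCount x.1 + weightedBoundaryCount x.2 + 2 * k
  | 0, _, _, rfl => le_rfl
  | _ + 1, _, _, ⟨_, hs, h⟩ => by
    have := hs.weightedBoundaryCount_le hn hm
    have := Steps.weightedBoundaryCount_le hn hm h
    omega

theorem weightedBoundaryCount_const (b : Bool) :
    weightedBoundaryCount (fun _ : Fin n => b) = 0 := by
  simp [weightedBoundaryCount]

theorem weightedBoundaryCount_alternating (hn : n % 2 = 0) :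
    weightedBoundaryCount (fun i : Fin n => decide (i.val % 2 = 0)) * 2 = n * (n - 1) := by
  have hbd : ∀ p : Fin n,
      (decide (p.val % 2 = 0) != decide ((finRotate n p).val % 2 = 0)) = true := by
    intro p
    have := p.isLt
    rw [val_finRotate]
    rcases Nat.lt_or_ge (p + 1) n with h | h
    · rw [Nat.mod_eq_of_lt h]; simp; omega
    · rw [show (p : ℕ) + 1 = n by omega, Nat.mod_self]; simp; omega
  simp only [weightedBoundaryCount, hbd, Bool.toNat_true, mul_one]
  rw [Equiv.sum_comp (finRotate n) (fun p => (p : ℕ)), Fin.sum_univ_eq_sum_range (fun i => i) n,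
    Finset.sum_range_id_mul_two]

theorem Steps.mul_sub_one_add_mul_sub_one_le (hn : 2 ≤ n) (hm : 2 ≤ m) (hn2 : n % 2 = 0)
    (hm2 : m % 2 = 0) {fc : Cfg n m → Bool} {k : ℕ}
    (h : Steps fc k ((fun _ => false, fun _ => false) : Cfg n m)
      ((fun i => decide (i.val % 2 = 0), fun i => decide (i.val % 2 = 0)) : Cfg n m)) :
    n * (n - 1) + m * (m - 1) ≤ 4 * k := by
  have := h.weightedBoundaryCount_le hn hm
  have := weightedBoundaryCount_alternating hn2
  have := weightedBoundaryCount_alternating hm2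
  simp only [weightedBoundaryCount_const] at *
  omega

/-! ### The construction -/

def shiftFrom (g : Fin n → Bool) (j : ℕ) : Fin n → Bool :=
  fun i => if j ≤ i then g ⟨i - 1, by omega⟩ else g i

def fillTo (g : Fin n → Bool) (j : ℕ) : Fin n → Bool :=
  fun i => if i.val ≤ j then g ⟨0, i.pos⟩ else g i

section

variable {fc : Cfg n m → Bool}

theorem steps_shiftFrom (g : Fin n → Bool) (h : Fin m → Bool) :
    ∀ k ≤ n - 1, Steps fc k (g, h) (shiftFrom g (n - k), h)
  | 0, _ => Prod.ext (funext fun i => by simp [shiftFrom, i.isLt.not_ge]) rfl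
  | k + 1, hk => (steps_shiftFrom g h k (by omega)).trans <| .single <|
    Step.left_of_eq h ⟨n - k - 1, by omega⟩ (by simp; omega) fun j => by
      simp only [shiftFrom, Fin.ext_iff]
      split_ifs <;> first | rfl | omega | (congr 1; ext; simp; omega)

theorem steps_fillTo (g : Fin n → Bool) (h : Fin m → Bool) :
    ∀ k ≤ n - 1, Steps fc k (g, h) (fillTo g k, h)
  | 0, _ => Prod.ext (funext fun i => by
      simp only [fillTo]; split_ifs with h0
      · congr 1; ext; simp; omega
      · rfl) rfl
  | k + 1, hk => (steps_fillTo g h k (by omega)).trans <| .single <|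
    Step.left_of_eq h ⟨k + 1, by omega⟩ (by simp) fun j => by
      simp only [fillTo, Fin.ext_iff]
      split_ifs <;> first | rfl | omega

theorem steps_shift (hn : 0 < n) (g : Fin n → Bool) (h : Fin m → Bool) :
    Steps fc (n - 1) (g, h) (shiftFrom g 1, h) := by
  simpa [Nat.sub_sub_self hn] using steps_shiftFrom (fc := fc) g h (n - 1) le_rfl

theorem steps_shift_right (hm : 0 < m) (g : Fin n → Bool) (h : Fin m → Bool) :
    Steps fc (m - 1) (g, h) (g, shiftFrom h 1) :=
  (steps_shift (fc := fun z => fc z.swap) hm h g).swap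

theorem steps_fill_right (g : Fin n → Bool) (h : Fin m → Bool) :
    Steps fc (m - 1) (g, h) (g, fillTo h (m - 1)) :=
  (steps_fillTo (fc := fun z => fc z.swap) h g (m - 1) le_rfl).swap

theorem steps_round (hn : 0 < n) (hm : 0 < m) (g : Fin n → Bool) {h h' : Fin m → Bool}
    (hh : Steps fc (m - 1) (shiftFrom g 1, h) (shiftFrom g 1, h')) :
    Steps fc (n + m - 1) (g, h)
      (update (shiftFrom g 1) ⟨0, hn⟩ (fc (shiftFrom g 1, h')),
        update h' ⟨0, hm⟩ (fc (shiftFrom g 1, h'))) := by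
  have := ((steps_shift (fc := fc) hn g h).trans hh).trans
    (.single (Step.center _ ⟨0, hn⟩ ⟨0, hm⟩ rfl rfl))
  rwa [show n - 1 + (m - 1) + 1 = n + m - 1 by omega] at this

end

/-- After `s` rounds in which `c` emitted the parity of the round number, cell `i` holds what
`c` emitted `i` rounds ago, counting only emissions from round `s₀` on (`false` otherwise). -/
def parityWave (s₀ s : ℕ) : Fin n → Bool := fun i => decide (s₀ ≤ s - i ∧ (s - i) % 2 = 1)

/-- The flooded right cycle: cell `0` holds the last emission and every other cell the one
before. -/
def echo (s : ℕ) : Fin n → Bool := fun i => decide ((s - min i.val 1) % 2 = 1)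

theorem update_shiftFrom_parityWave (hn : 0 < n) {s₀ s : ℕ} (hs : s₀ ≤ s + 1) :
    update (shiftFrom (parityWave s₀ s) 1) ⟨0, hn⟩ (decide ((s + 1) % 2 = 1)) =
      (parityWave s₀ (s + 1) : Fin n → Bool) := by
  funext i
  simp only [update_apply, shiftFrom, parityWave, Fin.ext_iff]
  split_ifs <;> simp only [decide_eq_decide] <;> omega

theorem update_fillTo_echo (hn : 0 < n) (s : ℕ) :
    update (fillTo (echo s) (n - 1)) ⟨0, hn⟩ (decide ((s + 1) % 2 = 1)) =
      (echo (s + 1) : Fin n → Bool) := by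
  funext i
  simp only [update_apply, fillTo, echo, Fin.ext_iff]
  split_ifs <;> simp only [decide_eq_decide] <;> omega

theorem parityWave_zero (s₀ : ℕ) : (parityWave s₀ 0 : Fin n → Bool) = fun _ => false := by
  funext i; simp [parityWave]

theorem echo_zero : (echo 0 : Fin n → Bool) = fun _ => false := by
  funext i; simp [echo]

theorem echo_eq_parityWave {s : ℕ} (hs : s % 2 = 1) :
    (echo s : Fin n → Bool) = parityWave s s := by
  funext i
  simp only [echo, parityWave, decide_eq_decide]
  omega

theorem parityWave_eq_alternating {s₀ s : ℕ} (hs₀ : s₀ + n ≤ s + 1) (hs : s % 2 = 1) :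
    (parityWave s₀ s : Fin n → Bool) = fun i => decide (i.val % 2 = 0) := by
  funext i
  simp only [parityWave, decide_eq_decide]
  omega

def canonicalNegative (hn : 0 < n) (hm : 0 < m) (z : Cfg n m) : Bool :=
  !(z.1 ⟨n - 1, by omega⟩) && !(z.2 ⟨m - 1, by omega⟩)

theorem steps_round_echo (hn : 0 < n) (hm : 0 < m) (hn2 : n % 2 = 0) (s : ℕ) :
    Steps (canonicalNegative hn hm) (n + m - 1) (parityWave 0 s, echo s)
      (parityWave 0 (s + 1), echo (s + 1)) := by
  have hc : canonicalNegative hn hm (shiftFrom (parityWave 0 s) 1, fillTo (echo s) (m - 1)) =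
      decide ((s + 1) % 2 = 1) := by
    simp only [canonicalNegative, shiftFrom, fillTo, parityWave, echo]
    rw [if_pos (by omega), if_pos (by omega)]
    simp only [← decide_not, ← Bool.decide_and, decide_eq_decide]
    omega
  have := steps_round hn hm (parityWave 0 s)
    (steps_fill_right (fc := canonicalNegative hn hm) _ (echo s))
  rwa [hc, update_shiftFrom_parityWave hn (by omega), update_fillTo_echo] at this

theorem steps_round_parityWave (hn : 0 < n) (hm : 0 < m) (hn2 : n % 2 = 0) (hm2 : m % 2 = 0)
    {s : ℕ} (hs : n - 1 ≤ s) :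
    Steps (canonicalNegative hn hm) (n + m - 1) (parityWave 0 s, parityWave (n - 1) s)
      (parityWave 0 (s + 1), parityWave (n - 1) (s + 1)) := by
  have hc : canonicalNegative hn hm
      (shiftFrom (parityWave 0 s) 1, shiftFrom (parityWave (n - 1) s) 1) =
      decide ((s + 1) % 2 = 1) := by
    simp only [canonicalNegative, shiftFrom, parityWave]
    rw [if_pos (by omega), if_pos (by omega)]
    simp only [← decide_not, ← Bool.decide_and, decide_eq_decide]
    omega
  have := steps_round hn hm (parityWave 0 s)
    (steps_shift_right (fc := canonicalNegative hn hm) hm _ (parityWave (n - 1) s))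
  rwa [hc, update_shiftFrom_parityWave hn (by omega),
    update_shiftFrom_parityWave hm (by omega)] at this

theorem steps_false_to_alternating (hn : 0 < n) (hm : 0 < m) (hn2 : n % 2 = 0)
    (hm2 : m % 2 = 0) :
    Steps (canonicalNegative hn hm) ((n - 1 + m) * (n + m - 1))
      ((fun _ => false, fun _ => false) : Cfg n m)
      ((fun i => decide (i.val % 2 = 0), fun i => decide (i.val % 2 = 0)) : Cfg n m) := by
  have phase₁ := Steps.iterate (fun s => (parityWave 0 s, echo s)) (n - 1) fun s _ =>
    steps_round_echo hn hm hn2 s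
  have phase₂ := Steps.iterate
    (fun t => (parityWave 0 (n - 1 + t), parityWave (n - 1) (n - 1 + t))) m
    fun t _ => steps_round_parityWave hn hm hn2 hm2 (s := n - 1 + t) (by omega)
  rw [parityWave_zero, echo_zero] at phase₁
  rw [Nat.add_zero, ← echo_eq_parityWave (show (n - 1) % 2 = 1 by omega),
    parityWave_eq_alternating (show 0 + n ≤ n - 1 + m + 1 by omega) (by omega),
    parityWave_eq_alternating (show n - 1 + m ≤ n - 1 + m + 1 by omega) (by omega)] at phase₂
  rw [add_mul]
  exact phase₁.trans phase₂

/-- In canonical negative double-cycles with both cycle sizes even, the minimal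
number of asynchronous updates transforming (0^n, 0^m) into the maximally
expressive configuration ((10)^{n/2}, (10)^{m/2}) is Θ(n² + m²): any update
sequence achieving it has length Ω(n² + m²), and some sequence of length
O(n² + m²) achieves it. -/
theorem stmt19 :
    (∃ c : ℚ, 0 < c ∧
      ∀ n m : ℕ, ∀ hn : 2 ≤ n, ∀ hm : 2 ≤ m, n % 2 = 0 → m % 2 = 0 →
        ∀ k : ℕ,
          Steps (fun z : Cfg n m => !(z.1 ⟨n - 1, by omega⟩) && !(z.2 ⟨m - 1, by omega⟩))
            k ((fun _ => false, fun _ => false) : Cfg n m)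
            ((fun i => decide (i.val % 2 = 0), fun i => decide (i.val % 2 = 0)) : Cfg n m) →
          c * ((n : ℚ) ^ 2 + (m : ℚ) ^ 2) ≤ (k : ℚ)) ∧
    (∃ C : ℚ, 0 < C ∧
      ∀ n m : ℕ, ∀ hn : 2 ≤ n, ∀ hm : 2 ≤ m, n % 2 = 0 → m % 2 = 0 →
        ∃ k : ℕ,
          Steps (fun z : Cfg n m => !(z.1 ⟨n - 1, by omega⟩) && !(z.2 ⟨m - 1, by omega⟩))
            k ((fun _ => false, fun _ => false) : Cfg n m)
            ((fun i => decide (i.val % 2 = 0), fun i => decide (i.val % 2 = 0)) : Cfg n m) ∧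
          (k : ℚ) ≤ C * ((n : ℚ) ^ 2 + (m : ℚ) ^ 2)) := by
  refine ⟨⟨1 / 8, by norm_num, fun n m hn hm hn2 hm2 k hk => ?_⟩,
    ⟨2, by norm_num, fun n m hn hm hn2 hm2 =>
      ⟨_, steps_false_to_alternating (by omega) (by omega) hn2 hm2, ?_⟩⟩⟩
  · have hlow := hk.mul_sub_one_add_mul_sub_one_le hn hm hn2 hm2
    have hsq : ∀ a : ℕ, 2 ≤ a → a ^ 2 ≤ 2 * (a * (a - 1)) := fun a ha => by
      obtain ⟨b, rfl⟩ : ∃ b, a = b + 1 := ⟨a - 1, by omega⟩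
      rw [Nat.add_sub_cancel]; nlinarith
    have : n ^ 2 + m ^ 2 ≤ 8 * k := by linarith [hsq n hn, hsq m hm]
    have : ((n ^ 2 + m ^ 2 : ℕ) : ℚ) ≤ ((8 * k : ℕ) : ℚ) := by exact_mod_cast this
    push_cast at this
    linarith
  · calc (((n - 1 + m) * (n + m - 1) : ℕ) : ℚ) ≤ (((n + m) * (n + m) : ℕ) : ℚ) := by
          exact_mod_cast Nat.mul_le_mul (by omega) (by omega)
      _ ≤ 2 * ((n : ℚ) ^ 2 + (m : ℚ) ^ 2) := by
          push_cast; nlinarith [sq_nonneg ((n : ℚ) - m)]
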